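/- arXiv:1304.7044 — 4 statements merged into one kernel-verified Lean document; each statement's English description precedes it below -/
import Mathlib

section
/- Let m be a positive integer with m ≡ 2 (mod 3), and let F = 𝔽_{2^{3m}}. Then the function f : F → F defined by f(x) = x^{2^m+1} + x^{2^{2m}+2^m} is NOT pseudo-planar on F. More precisely, there exists ε ∈ F with ε^{3} + ε^{2} + 1 = 0, and for any such ε one has N₃(ε) + Tr₃(ε^{3} + ε^{1+2^{m+1}}) = 0. -/
/-!
In characteristic 2 every root `ε` of `X³ + X² + 1` is a 7th root of unity, and `m ≡ 2 (mod 3)`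
gives `2^m ≡ 4` and `2^(2m) ≡ 2 (mod 7)`. Hence all exponents in question only matter modulo 7:
`f(ε^k) = ε^(5k) + ε^(6k)`, and the relation `ε² + ε = ε⁶` makes `x = 0` and `x = ε²` collide
under `x ↦ f(x + ε) + f(x) + εx`, while `N₃(ε) = 1` and `ε³ + ε^(1+2^(m+1)) = ε³ + ε² = 1`.
Such an `ε` exists because `7 ∣ 2^(3m) - 1` and `X⁷ - 1 = (X + 1)(X³ + X + 1)(X³ + X² + 1)`.
-/

lemma Nat.two_pow_mod_seven (n : ℕ) : 2 ^ n % 7 = 2 ^ (n % 3) % 7 := by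
  conv_lhs => rw [← Nat.div_add_mod n 3, pow_add, pow_mul, Nat.mul_mod, Nat.pow_mod]
  norm_num

lemma pow_eq_pow_of_mod_eq {M : Type*} [Monoid M] {x : M} {d n r : ℕ} (hx : x ^ d = 1)
    (h : n % d = r) : x ^ n = x ^ r := by
  rw [pow_eq_pow_mod n hx, h]

section CharTwo

variable {K : Type*} [Field K] [CharP K 2]

lemma pow_seven_eq_one_of_cube_add_sq_add_one_eq_zero {ε : K} (hε : ε ^ 3 + ε ^ 2 + 1 = 0) :
    ε ^ 7 = 1 := by
  linear_combination (ε ^ 4 + ε ^ 3 + ε ^ 2 + 1) * hε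
    - (ε ^ 6 + ε ^ 5 + ε ^ 4 + ε ^ 3 + ε ^ 2 + 1) * CharTwo.two_eq_zero (R := K)

lemma exists_cube_add_sq_add_one_eq_zero_of_pow_seven_eq_one {ζ : K} (h7 : ζ ^ 7 = 1)
    (h1 : ζ ≠ 1) : ∃ ε : K, ε ^ 3 + ε ^ 2 + 1 = 0 := by
  have h2 : (2 : K) = 0 := CharTwo.two_eq_zero
  have hζ0 : ζ ≠ 0 := by rintro rfl; simp at h7
  have hfactor : (ζ + 1) * (ζ ^ 3 + ζ + 1) * (ζ ^ 3 + ζ ^ 2 + 1) = 0 := by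
    linear_combination h7 + (ζ ^ 6 + ζ ^ 5 + 2 * ζ ^ 4 + 2 * ζ ^ 3 + ζ ^ 2 + ζ + 1) * h2
  rcases mul_eq_zero.mp hfactor with hfactor | hroot
  · rcases mul_eq_zero.mp hfactor with hone | hroot
    · exact absurd (by linear_combination hone - h2) h1
    · -- the reciprocal of a root of `X³ + X + 1` is a root of `X³ + X² + 1`
      refine ⟨ζ⁻¹, ?_⟩
      field_simp
      linear_combination hroot
  · exact ⟨ζ, hroot⟩

lemma exists_cube_add_sq_add_one_eq_zero [Finite K] (h7 : 7 ∣ Nat.card K - 1) :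
    ∃ ε : K, ε ^ 3 + ε ^ 2 + 1 = 0 := by
  have : Fact (Nat.Prime 7) := ⟨by norm_num⟩
  obtain ⟨ζ, hζ⟩ := exists_prime_orderOf_dvd_card' (G := Kˣ) 7 (by rwa [Nat.card_units])
  refine exists_cube_add_sq_add_one_eq_zero_of_pow_seven_eq_one (ζ := (ζ : K)) ?_ ?_
  · rw [← Units.val_pow_eq_pow_val, ← hζ, pow_orderOf_eq_one, Units.val_one]
  · intro h
    rw [Units.val_eq_one.mp h, orderOf_one] at hζ
    norm_num at hζ

variable {ε : K} (hε : ε ^ 3 + ε ^ 2 + 1 = 0) {a b : ℕ} (ha : a % 7 = 4) (hb : b % 7 = 2)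
include hε ha hb

lemma not_injective_of_cube_add_sq_add_one_eq_zero :
    ¬ Function.Injective fun x : K =>
      ((x + ε) ^ (a + 1) + (x + ε) ^ (b + a)) + (x ^ (a + 1) + x ^ (b + a)) + ε * x := by
  have h2 : (2 : K) = 0 := CharTwo.two_eq_zero
  have h7 := pow_seven_eq_one_of_cube_add_sq_add_one_eq_zero hε
  have hε0 : ε ≠ 0 := by rintro rfl; simp at hε
  have hε6 : ε ^ 2 + ε = ε ^ 6 := by
    linear_combination (-ε ^ 3 + ε ^ 2 - ε + 2) * hε + (-ε ^ 2 + ε - 1) * h2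
  intro hinj
  refine pow_ne_zero 2 hε0 (hinj ?_)
  simp only [hε6, zero_add, mul_zero, ← pow_mul]
  rw [pow_eq_pow_of_mod_eq h7 (show 6 * (a + 1) % 7 = 2 by omega),
    pow_eq_pow_of_mod_eq h7 (show 6 * (b + a) % 7 = 1 by omega),
    pow_eq_pow_of_mod_eq h7 (show 2 * (a + 1) % 7 = 3 by omega),
    pow_eq_pow_of_mod_eq h7 (show 2 * (b + a) % 7 = 5 by omega),
    pow_eq_pow_of_mod_eq h7 (show (a + 1) % 7 = 5 by omega),
    pow_eq_pow_of_mod_eq h7 (show (b + a) % 7 = 6 by omega),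
    zero_pow (Nat.succ_ne_zero a), zero_pow (by omega : b + a ≠ 0)]
  linear_combination (-ε ^ 3 + ε ^ 2 - ε + 4) * hε + (-2 * ε ^ 2 + ε - 2) * h2

lemma pow_add_trace_eq_zero_of_cube_add_sq_add_one_eq_zero {c : ℕ} (hc : c % 7 = 1) :
    ε ^ (1 + a + b) + ((ε ^ 3 + ε ^ (1 + c)) + (ε ^ 3 + ε ^ (1 + c)) ^ a
      + (ε ^ 3 + ε ^ (1 + c)) ^ b) = 0 := by
  have h2 : (2 : K) = 0 := CharTwo.two_eq_zero
  have h7 := pow_seven_eq_one_of_cube_add_sq_add_one_eq_zero hε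
  have hone : ε ^ 3 + ε ^ (1 + c) = 1 := by
    rw [pow_eq_pow_of_mod_eq h7 (show (1 + c) % 7 = 2 by omega)]
    linear_combination hε - h2
  rw [hone, pow_eq_pow_of_mod_eq h7 (show (1 + a + b) % 7 = 0 by omega)]
  linear_combination 2 * h2

end CharTwo

theorem not_pseudoPlanar_of_mod_three_eq_two_general
    (m : ℕ) (hm3 : m % 3 = 2)
    (Tr₃ N₃ : GaloisField 2 (3 * m) → GaloisField 2 (3 * m))
    (hTr : ∀ x, Tr₃ x = x + x ^ 2 ^ m + x ^ 2 ^ (2 * m))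
    (hN : ∀ x, N₃ x = x ^ (1 + 2 ^ m + 2 ^ (2 * m)))
    (f : GaloisField 2 (3 * m) → GaloisField 2 (3 * m))
    (hf : ∀ x, f x = x ^ (2 ^ m + 1) + x ^ (2 ^ (2 * m) + 2 ^ m)) :
    (¬ ∀ ε : GaloisField 2 (3 * m), ε ≠ 0 →
        Function.Bijective (fun x => f (x + ε) + f x + ε * x)) ∧
    (∃ ε : GaloisField 2 (3 * m), ε ^ 3 + ε ^ 2 + 1 = 0) ∧
    (∀ ε : GaloisField 2 (3 * m), ε ^ 3 + ε ^ 2 + 1 = 0 →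
        N₃ ε + Tr₃ (ε ^ 3 + ε ^ (1 + 2 ^ (m + 1))) = 0) := by
  have ha : 2 ^ m % 7 = 4 := by rw [Nat.two_pow_mod_seven, hm3]; rfl
  have hb : 2 ^ (2 * m) % 7 = 2 := by rw [Nat.two_pow_mod_seven, show 2 * m % 3 = 1 by omega]; rfl
  have hc : 2 ^ (m + 1) % 7 = 1 := by rw [Nat.two_pow_mod_seven, show (m + 1) % 3 = 0 by omega]; rfl
  have hroot : ∃ ε : GaloisField 2 (3 * m), ε ^ 3 + ε ^ 2 + 1 = 0 := by
    apply exists_cube_add_sq_add_one_eq_zero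
    rw [GaloisField.card 2 (3 * m) (by omega), pow_mul]
    simpa using Nat.sub_dvd_pow_sub_pow 8 1 m
  obtain rfl : f = _ := funext hf
  refine ⟨fun hbij => ?_, hroot, fun ε hε => ?_⟩
  · obtain ⟨ε, hε⟩ := hroot
    have hε0 : ε ≠ 0 := by rintro rfl; simp at hε
    exact not_injective_of_cube_add_sq_add_one_eq_zero hε ha hb (hbij ε hε0).injective
  · rw [hN, hTr]
    exact pow_add_trace_eq_zero_of_cube_add_sq_add_one_eq_zero hε ha hb hc

/-- **Remark.** Let `m` be a positive integer with `m ≡ 2 (mod 3)` and `F = 𝔽_{2^(3m)}`. Then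
`f(x) = x^(2^m+1) + x^(2^(2m)+2^m)` is NOT pseudo-planar on `F`. More precisely, there exists
`ε ∈ F` with `ε³ + ε² + 1 = 0`, and for any such `ε` one has
`N₃(ε) + Tr₃(ε³ + ε^(1+2^(m+1))) = 0`, where `Tr₃(x) = x + x^(2^m) + x^(2^(2m))` and
`N₃(x) = x^(1+2^m+2^(2m))`. -/
theorem not_pseudoPlanar_of_mod_three_eq_two
    (m : ℕ) (hm : 0 < m) (hm3 : m % 3 = 2)
    (Tr₃ N₃ : GaloisField 2 (3 * m) → GaloisField 2 (3 * m))
    (hTr : ∀ x, Tr₃ x = x + x ^ 2 ^ m + x ^ 2 ^ (2 * m))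
    (hN : ∀ x, N₃ x = x ^ (1 + 2 ^ m + 2 ^ (2 * m)))
    (f : GaloisField 2 (3 * m) → GaloisField 2 (3 * m))
    (hf : ∀ x, f x = x ^ (2 ^ m + 1) + x ^ (2 ^ (2 * m) + 2 ^ m)) :
    (¬ ∀ ε : GaloisField 2 (3 * m), ε ≠ 0 →
        Function.Bijective (fun x => f (x + ε) + f x + ε * x)) ∧
    (∃ ε : GaloisField 2 (3 * m), ε ^ 3 + ε ^ 2 + 1 = 0) ∧
    (∀ ε : GaloisField 2 (3 * m), ε ^ 3 + ε ^ 2 + 1 = 0 →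
        N₃ ε + Tr₃ (ε ^ 3 + ε ^ (1 + 2 ^ (m + 1))) = 0) :=
  not_pseudoPlanar_of_mod_three_eq_two_general m hm3 Tr₃ N₃ hTr hN f hf
end

section
/- Let m be a positive integer and F = 𝔽_{2^{3m}}. The function f : F → F defined by f(x) = x^{2^{2m}+1} + x^{2^{2m}+2^m} is pseudo-planar on F if and only if for every ε ∈ F with ε ≠ 0 one has N₃(ε) + Tr₃(ε^{3} + ε^{2+2^{m}}) ≠ 0. -/
/-!
Write `q = 2 ^ m`. For `ε ≠ 0` the map `x ↦ f (x + ε) + f x + ε x` is, up to an additive constant,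
the `q`-linearized polynomial `L x = a x + b x ^ q + c x ^ (q ^ 2)` with `a = ε + ε ^ (q ^ 2)`,
`b = ε ^ (q ^ 2)`, `c = ε + ε ^ q`. Such an `L` permutes `𝔽_{q³}` iff its Dickson matrix
`(a_{j - i} ^ (q ^ i))` is nonsingular: the matrix sends `(x, x ^ q, x ^ (q ^ 2))` to
`(L x, (L x) ^ q, (L x) ^ (q ^ 2))`, and a nonzero linearized polynomial of degree at most `q ^ 2`
cannot vanish on all of `𝔽_{q³}`. In characteristic `2` that determinant is
`N₃ ε + Tr₃ (ε ^ 3 + ε ^ (2 + q))`.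
-/

open Polynomial Matrix

section Linearized

variable {K : Type*} [Field K] {n q : ℕ}

/-- The `q`-linearized polynomial `∑ i, a i * x ^ q ^ i` is written `a ⬝ᵥ qPowers q x`. -/
def qPowers (q : ℕ) (x : K) : Fin n → K := fun i => x ^ q ^ (i : ℕ)

def dicksonMatrix (q : ℕ) (a : Fin n → K) : Matrix (Fin n) (Fin n) K :=
  Matrix.of fun i j => a (j - i) ^ q ^ (i : ℕ)

def powRingHom (hfrob : ∀ x y : K, (x + y) ^ q = x ^ q + y ^ q) : K →+* K :=
  RingHom.mk' (powMonoidHom q) hfrob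

theorem powRingHom_pow_apply (hfrob : ∀ x y : K, (x + y) ^ q = x ^ q + y ^ q) (k : ℕ) (x : K) :
    (powRingHom hfrob ^ k) x = x ^ q ^ k := by
  rw [RingHom.coe_pow]
  exact congrFun (pow_iterate q k) x

theorem eq_zero_of_forall_dotProduct_qPowers_eq_zero [Fintype K] (hq : 1 < q)
    (hcard : q ^ (n - 1) < Fintype.card K) {v : Fin n → K}
    (h : ∀ y : K, v ⬝ᵥ qPowers q y = 0) : v = 0 := by
  set P : K[X] := ∑ i, C (v i) * X ^ q ^ (i : ℕ)
  have hdeg : P.natDegree ≤ q ^ (n - 1) :=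
    natDegree_sum_le_of_forall_le _ _ fun i _ => (natDegree_C_mul_X_pow_le _ _).trans
      (Nat.pow_le_pow_right (by omega) (by omega))
  have hP : P = 0 := eq_zero_of_natDegree_lt_card_of_eval_eq_zero P Function.injective_id
    (fun y => by simpa [P, eval_finsetSum, dotProduct, qPowers] using h y)
    (hdeg.trans_lt hcard)
  have hinj : Function.Injective fun i : Fin n => q ^ (i : ℕ) :=
    (Nat.pow_right_injective hq).comp Fin.val_injective
  ext j
  simpa [P, finsetSum_coeff, coeff_C_mul_X_pow, hinj.eq_iff] using
    congrArg (coeff · (q ^ (j : ℕ))) hP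

theorem pow_pow_mod (hcyc : ∀ x : K, x ^ q ^ n = x) (x : K) (k : ℕ) :
    x ^ q ^ (k % n) = x ^ q ^ k := by
  have hper : Function.IsPeriodicPt (fun x : K => x ^ q) n x := by
    simp [Function.IsPeriodicPt, Function.IsFixedPt, pow_iterate, hcyc]
  simpa [pow_iterate] using hper.iterate_mod_apply k

variable (hfrob : ∀ x y : K, (x + y) ^ q = x ^ q + y ^ q)
include hfrob

theorem add_pow_pow_of_add_pow (k : ℕ) (x y : K) : (x + y) ^ q ^ k = x ^ q ^ k + y ^ q ^ k := by
  simp only [← powRingHom_pow_apply hfrob, map_add]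

theorem qPowers_sub (x y : K) : (qPowers q (x - y) : Fin n → K) = qPowers q x - qPowers q y := by
  ext i
  simp only [qPowers, ← powRingHom_pow_apply hfrob, map_sub, Pi.sub_apply]

theorem dicksonMatrix_mulVec_qPowers [NeZero n] (hcyc : ∀ x : K, x ^ q ^ n = x)
    (a : Fin n → K) (x : K) :
    dicksonMatrix q a *ᵥ qPowers q x = qPowers q (a ⬝ᵥ qPowers q x) := by
  ext i
  have hsum : (a ⬝ᵥ qPowers q x) ^ q ^ (i : ℕ) =
      ∑ k, a k ^ q ^ (i : ℕ) * x ^ q ^ ((k + i : Fin n) : ℕ) := by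
    simp only [dotProduct, qPowers, ← powRingHom_pow_apply hfrob, map_sum, map_mul]
    simp only [powRingHom_pow_apply, ← pow_mul, ← pow_add, Fin.val_add, pow_pow_mod hcyc]
  rw [mulVec, dotProduct, ← Equiv.sum_comp (Equiv.addRight i)]
  simp [dicksonMatrix, qPowers, hsum]

theorem bijective_dotProduct_qPowers_iff_det_dicksonMatrix_ne_zero [Fintype K] [NeZero n]
    (hq : 1 < q) (hcard : Fintype.card K = q ^ n) (a : Fin n → K) :
    Function.Bijective (fun x => a ⬝ᵥ qPowers q x) ↔ (dicksonMatrix q a).det ≠ 0 := by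
  have hcyc : ∀ x : K, x ^ q ^ n = x := fun x => hcard ▸ FiniteField.pow_card x
  constructor
  · intro hbij hdet
    obtain ⟨v, hv, hvD⟩ := exists_vecMul_eq_zero_iff.mpr hdet
    refine hv (eq_zero_of_forall_dotProduct_qPowers_eq_zero hq ?_ fun y => ?_)
    · exact hcard ▸ Nat.pow_lt_pow_right hq (Nat.sub_lt (NeZero.pos n) one_pos)
    · obtain ⟨x, rfl⟩ := hbij.2 y
      rw [← dicksonMatrix_mulVec_qPowers hfrob hcyc, dotProduct_mulVec, hvD, zero_dotProduct]
  · intro hdet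
    refine Finite.injective_iff_bijective.mp fun x y hxy => sub_eq_zero.mp ?_
    have hker : dicksonMatrix q a *ᵥ qPowers q (x - y) = 0 := by
      rw [dicksonMatrix_mulVec_qPowers hfrob hcyc, qPowers_sub hfrob, dotProduct_sub,
        show a ⬝ᵥ qPowers q x = a ⬝ᵥ qPowers q y from hxy, sub_self]
      simpa using qPowers_sub hfrob (0 : K) 0
    simpa [qPowers] using congrFun (eq_zero_of_mulVec_eq_zero hdet hker) 0

end Linearized

theorem det_dicksonMatrix_fin_three {K : Type*} [Field K] (q : ℕ) (a b c : K) :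
    (dicksonMatrix q ![a, b, c]).det =
      a * a ^ q * a ^ q ^ 2 - a * b ^ q * c ^ q ^ 2 - b * c ^ q * a ^ q ^ 2 +
        b * b ^ q * b ^ q ^ 2 + c * c ^ q * c ^ q ^ 2 - c * a ^ q * b ^ q ^ 2 := by
  simp [dicksonMatrix, det_fin_three]

section CharacteristicTwo

variable {K : Type*} [Field K] [CharP K 2] {q : ℕ}
variable (hfrob : ∀ x y : K, (x + y) ^ q = x ^ q + y ^ q)
include hfrob

theorem pseudoPlanar_difference_eq_dotProduct_qPowers_add (ε x : K) :
    (x + ε) ^ (q ^ 2 + 1) + (x + ε) ^ (q ^ 2 + q) + (x ^ (q ^ 2 + 1) + x ^ (q ^ 2 + q)) + ε * x =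
      ![ε + ε ^ q ^ 2, ε ^ q ^ 2, ε + ε ^ q] ⬝ᵥ qPowers q x +
        (ε ^ (q ^ 2 + 1) + ε ^ (q ^ 2 + q)) := by
  simp only [dotProduct, Fin.sum_univ_three, qPowers, cons_val_zero, cons_val_one, cons_val_two,
    Fin.val_zero, Fin.val_one, Fin.val_two, vecHead, vecTail, Function.comp_apply,
    Fin.succ_zero_eq_one, pow_zero, pow_one, pow_add, hfrob,
    add_pow_pow_of_add_pow hfrob 2]
  linear_combination (x ^ q ^ 2 * x + x ^ q ^ 2 * x ^ q) * CharTwo.two_eq_zero (R := K)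

theorem det_dicksonMatrix_eq_norm_add_trace (hcyc : ∀ x : K, x ^ q ^ 3 = x) (ε : K) :
    (dicksonMatrix q ![ε + ε ^ q ^ 2, ε ^ q ^ 2, ε + ε ^ q]).det =
      ε ^ (1 + q + q ^ 2) + ((ε ^ 3 + ε ^ (2 + q)) + (ε ^ 3 + ε ^ (2 + q)) ^ q
        + (ε ^ 3 + ε ^ (2 + q)) ^ q ^ 2) := by
  set φ := powRingHom hfrob
  have hφ : ∀ x, x ^ q = φ x := fun x => rfl
  have hφ3 : φ (φ (φ ε)) = ε := by
    simpa only [pow_succ, pow_zero, one_mul, pow_mul, hφ] using hcyc ε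
  rw [det_dicksonMatrix_fin_three]
  simp only [sq q, pow_add, pow_one, pow_mul, hφ, map_add, map_mul, map_pow, hφ3]
  linear_combination
    (2 * ε * φ ε * φ (φ ε) - ε ^ 3 - φ ε ^ 3 - φ (φ ε) ^ 3) * CharTwo.two_eq_zero (R := K)

end CharacteristicTwo

/-- The function `f(x) = x^(2^(2m)+1) + x^(2^(2m)+2^m)` on `F = 𝔽_{2^(3m)}` is pseudo-planar
if and only if `N₃(ε) + Tr₃(ε³ + ε^(2+2^m)) ≠ 0` for every `ε ≠ 0`, where
`Tr₃(x) = x + x^(2^m) + x^(2^(2m))` and `N₃(x) = x^(1+2^m+2^(2m))`. -/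
theorem pseudoPlanar_iff_norm_trace_condition₂
    (m : ℕ) (hm : 0 < m)
    (Tr₃ N₃ : GaloisField 2 (3 * m) → GaloisField 2 (3 * m))
    (hTr : ∀ x, Tr₃ x = x + x ^ 2 ^ m + x ^ 2 ^ (2 * m))
    (hN : ∀ x, N₃ x = x ^ (1 + 2 ^ m + 2 ^ (2 * m)))
    (f : GaloisField 2 (3 * m) → GaloisField 2 (3 * m))
    (hf : ∀ x, f x = x ^ (2 ^ (2 * m) + 1) + x ^ (2 ^ (2 * m) + 2 ^ m)) :
    (∀ ε : GaloisField 2 (3 * m), ε ≠ 0 →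
        Function.Bijective (fun x => f (x + ε) + f x + ε * x)) ↔
    (∀ ε : GaloisField 2 (3 * m), ε ≠ 0 →
        N₃ ε + Tr₃ (ε ^ 3 + ε ^ (2 + 2 ^ m)) ≠ 0) := by
  let _ : Fintype (GaloisField 2 (3 * m)) := Fintype.ofFinite _
  have hcard : Fintype.card (GaloisField 2 (3 * m)) = (2 ^ m) ^ 3 := by
    rw [← Nat.card_eq_fintype_card, GaloisField.card 2 (3 * m) (by omega), pow_mul']
  have hfrob : ∀ x y : GaloisField 2 (3 * m), (x + y) ^ 2 ^ m = x ^ 2 ^ m + y ^ 2 ^ m :=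
    fun x y => add_pow_char_pow x y 2 m
  have hsq : 2 ^ (2 * m) = (2 ^ m) ^ 2 := pow_mul' 2 2 m
  refine forall_congr' fun ε => imp_congr_right fun _ => ?_
  have hdiff : (fun x => f (x + ε) + f x + ε * x) = fun x =>
      ![ε + ε ^ (2 ^ m) ^ 2, ε ^ (2 ^ m) ^ 2, ε + ε ^ 2 ^ m] ⬝ᵥ qPowers (2 ^ m) x +
        (ε ^ ((2 ^ m) ^ 2 + 1) + ε ^ ((2 ^ m) ^ 2 + 2 ^ m)) := by
    ext x
    rw [hf, hf, hsq]
    exact pseudoPlanar_difference_eq_dotProduct_qPowers_add hfrob ε x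
  rw [hdiff, ← Function.comp_def (· + _), (AddGroup.addRight_bijective _).of_comp_iff',
    bijective_dotProduct_qPowers_iff_det_dicksonMatrix_ne_zero hfrob
      (Nat.one_lt_two_pow hm.ne') hcard,
    det_dicksonMatrix_eq_norm_add_trace hfrob (fun x => hcard ▸ FiniteField.pow_card x),
    hN, hTr, hsq]
end

section
/- Let m be a positive integer with m ≢ 1 (mod 3), and let F = 𝔽_{2^{3m}}. Then for every ε ∈ F with ε ≠ 0 one has ε^{1+2^m+2^{2m}} + Tr₃(ε^{3} + ε^{2+2^{m}}) ≠ 0. -/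
/-!
Write `τ x = x ^ 2 ^ m`, an automorphism of `F` with `τ³ = 1`. The left-hand side is the cubic form
`f(A, B, C) = ABC + A³ + A²B + B³ + B²C + C³ + C²A` evaluated at `(ε, τ ε, τ² ε)`. Since `𝔽₈ ⊆ F`,
`X³ + X + 1` has a root in `F`, and over its three roots `η` the form `f` splits into the linear
factors `A + η³ B + η² C`. If one of them vanishes at `(ε, τ ε, τ² ε)`, applying `τ` twice gives a
linear system in `ε, τ ε, τ² ε`. As `m ≢ 1 (mod 3)`, `τ` acts on `𝔽₈` as the identity or as
`x ↦ x⁴`, and the determinant of the system is `η⁵` or `1` respectively; hence `ε = 0`.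
-/

section CharTwo

variable {R : Type*} [CommRing R] [CharP R 2] {θ : R}

theorem pow_seven_eq_one_of_cube_eq_add_one (hθ : θ ^ 3 = θ + 1) : θ ^ 7 = 1 := by
  grind

theorem pow_two_pow_eq_of_cube_eq_add_one (hθ : θ ^ 3 = θ + 1) {m : ℕ} (hm : m % 3 ≠ 1) :
    θ ^ 2 ^ m = θ ∨ θ ^ 2 ^ m = θ ^ 4 := by
  have h7 : 2 ^ m % 7 = 2 ^ (m % 3) % 7 := by
    conv_lhs => rw [← Nat.div_add_mod m 3, pow_add, pow_mul]
    simp [Nat.mul_mod, Nat.pow_mod]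
  rw [pow_eq_pow_mod _ (pow_seven_eq_one_of_cube_eq_add_one hθ), h7]
  rcases (by omega : m % 3 = 0 ∨ m % 3 = 2) with h | h <;> simp [h]

theorem cubic_form_eq_prod_of_cube_eq_add_one (hθ : θ ^ 3 = θ + 1) (A B C : R) :
    A * B * C + A ^ 3 + A ^ 2 * B + B ^ 3 + B ^ 2 * C + C ^ 3 + C ^ 2 * A =
      (A + θ ^ 3 * B + θ ^ 2 * C) * (A + (θ ^ 2) ^ 3 * B + (θ ^ 2) ^ 2 * C) *
        (A + (θ ^ 4) ^ 3 * B + (θ ^ 4) ^ 2 * C) := by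
  grind

theorem exists_cube_eq_add_one_and_eq_zero_of_cubic_form_eq_zero [IsDomain R]
    (hθ : θ ^ 3 = θ + 1) {A B C : R}
    (h : A * B * C + A ^ 3 + A ^ 2 * B + B ^ 3 + B ^ 2 * C + C ^ 3 + C ^ 2 * A = 0) :
    ∃ η : R, η ^ 3 = η + 1 ∧ A + η ^ 3 * B + η ^ 2 * C = 0 := by
  rw [cubic_form_eq_prod_of_cube_eq_add_one hθ] at h
  rcases mul_eq_zero.1 h with h | h
  · rcases mul_eq_zero.1 h with h | h
    · exact ⟨θ, hθ, h⟩
    · exact ⟨θ ^ 2, by grind, h⟩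
  · exact ⟨θ ^ 4, by grind, h⟩

theorem eq_zero_of_add_mul_map_add_mul_map_map_eq_zero (τ : R →+* R)
    (hτ : ∀ x, τ (τ (τ x)) = x) (hθ : θ ^ 3 = θ + 1) (hτθ : τ θ = θ ∨ τ θ = θ ^ 4) {A : R}
    (h : A + θ ^ 3 * τ A + θ ^ 2 * τ (τ A) = 0) : A = 0 := by
  have h1 := congrArg τ h
  have h2 := congrArg τ h1
  simp only [map_add, map_mul, map_pow, map_zero, hτ] at h1 h2
  rcases hτθ with hτθ | hτθ <;> simp only [hτθ, map_pow] at h1 h2 <;> grind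

theorem exists_cube_eq_add_one_of_seven_dvd_card_units {K : Type*} [Field K] [Finite K]
    [CharP K 2] (h7 : 7 ∣ Nat.card Kˣ) : ∃ θ : K, θ ^ 3 = θ + 1 := by
  have : Fact (Nat.Prime 7) := ⟨by norm_num⟩
  obtain ⟨z, hz⟩ := exists_prime_orderOf_dvd_card' 7 h7
  have hz7 : (z : K) ^ 7 = 1 := by
    rw [← Units.val_pow_eq_pow_val, ← hz, pow_orderOf_eq_one, Units.val_one]
  have hz1 : (z : K) ≠ 1 := by
    intro h1; rw [Units.val_eq_one.1 h1, orderOf_one] at hz; norm_num at hz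
  have hsplit : ((z : K) + 1) * (((z : K) ^ 3 + z + 1) * ((z : K) ^ 3 + z ^ 2 + 1)) = 0 := by grind
  rcases mul_eq_zero.1 hsplit with h | h
  · exact absurd (by grind) hz1
  rcases mul_eq_zero.1 h with h | h
  · exact ⟨z, by grind⟩
  · exact ⟨z ^ 6, by grind⟩

end CharTwo

namespace GaloisField

theorem pow_prime_pow_eq_self (p : ℕ) [Fact p.Prime] {n : ℕ} (hn : n ≠ 0) (x : GaloisField p n) :
    x ^ p ^ n = x := by
  have := Fintype.ofFinite (GaloisField p n)
  rw [← card p n hn, Nat.card_eq_fintype_card, FiniteField.pow_card]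

theorem seven_dvd_card_units {m : ℕ} (hm : m ≠ 0) : 7 ∣ Nat.card (GaloisField 2 (3 * m))ˣ := by
  rw [Nat.card_units, card 2 _ (by positivity), pow_mul]
  simpa using Nat.sub_dvd_pow_sub_pow 8 1 m

theorem iterateFrobenius_iterate_three (p : ℕ) [Fact p.Prime] {m : ℕ} (hm : m ≠ 0)
    (x : GaloisField p (3 * m)) : (iterateFrobenius (GaloisField p (3 * m)) p m)^[3] x = x := by
  rw [← iterateFrobenius_mul_apply, iterateFrobenius_def, mul_comm m]
  exact pow_prime_pow_eq_self p (by positivity) x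

end GaloisField

/-- Let `m` be a positive integer with `m ≢ 1 (mod 3)` and `F = 𝔽_{2^(3m)}`. Then for every
`ε ∈ F`, `ε ≠ 0`, one has `ε^(1+2^m+2^(2m)) + Tr₃(ε³ + ε^(2+2^m)) ≠ 0`, where
`Tr₃(x) = x + x^(2^m) + x^(2^(2m))`. -/
theorem norm_add_trace_ne_zero_of_mod_three_ne_one
    (m : ℕ) (hm : 0 < m) (hm3 : m % 3 ≠ 1)
    (Tr₃ : GaloisField 2 (3 * m) → GaloisField 2 (3 * m))
    (hTr : ∀ x, Tr₃ x = x + x ^ 2 ^ m + x ^ 2 ^ (2 * m)) :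
    ∀ ε : GaloisField 2 (3 * m), ε ≠ 0 →
      ε ^ (1 + 2 ^ m + 2 ^ (2 * m)) + Tr₃ (ε ^ 3 + ε ^ (2 + 2 ^ m)) ≠ 0 := by
  intro ε hε hS
  set τ := iterateFrobenius (GaloisField 2 (3 * m)) 2 m
  have hτ : ∀ x, τ (τ (τ x)) = x := GaloisField.iterateFrobenius_iterate_three 2 hm.ne'
  have hpow : ∀ x, x ^ 2 ^ m = τ x := fun x => rfl
  have hpow2 : ∀ x, x ^ 2 ^ (2 * m) = τ (τ x) := fun x => by rw [two_mul, pow_add, pow_mul]; rfl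
  simp only [hTr, pow_add, pow_one, hpow, hpow2, map_add, map_mul, map_pow, hτ] at hS
  obtain ⟨θ, hθ⟩ := exists_cube_eq_add_one_of_seven_dvd_card_units
    (GaloisField.seven_dvd_card_units hm.ne')
  obtain ⟨η, hη, hfactor⟩ := exists_cube_eq_add_one_and_eq_zero_of_cubic_form_eq_zero hθ
    (A := ε) (B := τ ε) (C := τ (τ ε)) (by linear_combination hS)
  exact hε (eq_zero_of_add_mul_map_add_mul_map_map_eq_zero τ hτ hη
    (pow_two_pow_eq_of_cube_eq_add_one hη hm3) hfactor)
end

section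
/- Let n be a positive integer, F = 𝔽_{2^n}, R = W₂(F), and let f : F → F be a pseudo-planar function with f(0) = 0. Then: (i) for every g ∈ S₃, the number of ordered pairs (x,y) ∈ S₁ × S₁ with x + y = g equals 1; (ii) for every g ∈ R with g ∉ S₃, the number of ordered pairs (x,y) ∈ S₁ × S₁ with x + y = g equals 0 or 2. -/
/-!
In Witt coordinates, addition in `W₂(F)` reads `(a₀, a₁) + (b₀, b₁) = (a₀ + b₀, a₁ + b₁ + a₀ b₀)`
and `D_f` is the graph `{(x, f x)}`. Hence `g = (x, f x) + (y, f y)` with `x, y ≠ 0` forces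
`y = x + g₀` and `f x + f (x + g₀) + x (x + g₀) = g₁`. For `g₀ = 0` the left side is `x²`, which
has exactly one nonzero root if `g₁ ≠ 0` and none if `g₁ = 0`. For `g₀ ≠ 0` the solutions come in
pairs `{x, x + g₀}`, and two solutions `x, z` always lie in the same pair: otherwise the map
`w ↦ f (w + δ) + f w + δ w` with `δ = x + z`, injective by pseudo-planarity, would take the same
value at `x` and at `z + g₀`.
-/

open scoped Classical

noncomputable section

/-- The Galois ring `GR(4,n)`, realized as length-2 2-typical truncated Witt vectors
over `F = 𝔽_{2^n}`. -/
abbrev GR (n : ℕ) : Type := TruncatedWittVector 2 2 (GaloisField 2 n)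

/-- The truncated Teichmüller lift `τ : F → W₂(F)`. -/
def teich (n : ℕ) (x : GaloisField 2 n) : GR n :=
  WittVector.truncate 2 (WittVector.teichmuller 2 x)

/-- The lifted set `D_f = {τ(x) + 2·τ(f(x)^(2^(n-1))) : x ∈ F} ⊆ GR(4,n)`. -/
def Dset (n : ℕ) (f : GaloisField 2 n → GaloisField 2 n) : Set (GR n) :=
  {g | ∃ x : GaloisField 2 n, g = teich n x + 2 * teich n (f x ^ 2 ^ (n - 1))}

/-- `S₁ = D_f \ {0}`. -/
def S1 (n : ℕ) (f : GaloisField 2 n → GaloisField 2 n) : Set (GR n) :=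
  Dset n f \ {0}

/-- `S₂ = {−s : s ∈ S₁}`. -/
def S2 (n : ℕ) (f : GaloisField 2 n → GaloisField 2 n) : Set (GR n) :=
  (fun s => -s) '' S1 n f

/-- `S₃ = 2R \ {0}`. -/
def S3 (n : ℕ) : Set (GR n) :=
  {g | ∃ x : GR n, g = 2 * x} \ {0}

/-- `S₄`: the elements outside `S₀ ∪ S₁ ∪ S₂ ∪ S₃` appearing in the multiset `D_f²`. -/
def S4 (n : ℕ) (f : GaloisField 2 n → GaloisField 2 n) : Set (GR n) :=
  {g | g ∉ ({0} : Set (GR n)) ∪ S1 n f ∪ S2 n f ∪ S3 n ∧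
    ∃ x ∈ Dset n f, ∃ y ∈ Dset n f, g = x + y}

/-- `S₅`: the remaining elements. -/
def S5 (n : ℕ) (f : GaloisField 2 n → GaloisField 2 n) : Set (GR n) :=
  {g | g ∉ ({0} : Set (GR n)) ∪ S1 n f ∪ S2 n f ∪ S3 n ∪ S4 n f}

namespace WittVector

open MvPolynomial

theorem wittAdd_two_one :
    wittAdd 2 1 = X (0, 1) + X (1, 1) - X (0, 0) * X (1, 0) := by
  have h : bind₁ (wittAdd 2) (wittPolynomial 2 ℤ 1) =
      bind₁ (fun i => rename (Prod.mk i) (wittPolynomial 2 ℤ 1)) (X 0 + X 1) :=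
    wittStructureInt_prop 2 _ 1
  simp only [wittPolynomial_one, map_add, map_mul, map_pow, map_natCast, bind₁_X_right,
    rename_X, wittAdd_zero] at h
  apply mul_left_cancel₀ (two_ne_zero : (2 : MvPolynomial (Fin 2 × ℕ) ℤ) ≠ 0)
  linear_combination h

theorem add_coeff_one_of_two {R : Type*} [CommRing R] (x y : WittVector 2 R) :
    (x + y).coeff 1 = x.coeff 1 + y.coeff 1 - x.coeff 0 * y.coeff 0 := by
  simp [add_coeff, wittAdd_two_one, peval]

end WittVector

namespace TruncatedWittVector

theorem ext_two_iff {R : Type*} {x y : TruncatedWittVector 2 2 R} :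
    x = y ↔ x.coeff 0 = y.coeff 0 ∧ x.coeff 1 = y.coeff 1 := by
  refine ⟨by rintro rfl; exact ⟨rfl, rfl⟩, fun ⟨h₀, h₁⟩ => ext fun i => ?_⟩
  fin_cases i <;> assumption

variable {R : Type*} [CommRing R]

theorem add_coeff_zero (x y : TruncatedWittVector 2 2 R) :
    (x + y).coeff 0 = x.coeff 0 + y.coeff 0 := by
  obtain ⟨u, rfl⟩ := WittVector.truncate_surjective 2 2 R x
  obtain ⟨v, rfl⟩ := WittVector.truncate_surjective 2 2 R y
  simp only [← map_add, WittVector.coeff_truncate]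
  exact WittVector.add_coeff_zero u v

variable [CharP R 2]

theorem add_coeff_one (x y : TruncatedWittVector 2 2 R) :
    (x + y).coeff 1 = x.coeff 1 + y.coeff 1 + x.coeff 0 * y.coeff 0 := by
  obtain ⟨u, rfl⟩ := WittVector.truncate_surjective 2 2 R x
  obtain ⟨v, rfl⟩ := WittVector.truncate_surjective 2 2 R y
  simp only [← map_add, WittVector.coeff_truncate, Fin.val_zero, Fin.val_one]
  rw [WittVector.add_coeff_one_of_two]
  linear_combination (-(u.coeff 0 * v.coeff 0)) * CharP.cast_eq_zero R 2

theorem two_mul_coeff_zero (x : TruncatedWittVector 2 2 R) : (2 * x).coeff 0 = 0 := by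
  rw [two_mul, add_coeff_zero]
  linear_combination x.coeff 0 * CharP.cast_eq_zero R 2

theorem two_mul_coeff_one (x : TruncatedWittVector 2 2 R) :
    (2 * x).coeff 1 = x.coeff 0 ^ 2 := by
  rw [two_mul, add_coeff_one]
  linear_combination x.coeff 1 * CharP.cast_eq_zero R 2

end TruncatedWittVector

section PseudoPlanar

variable {K : Type*} [CommRing K] [CharP K 2]

/-- The `x` with `(x, f x) + (x + a, f (x + a)) = (a, b)` in Witt coordinates, both summands
nonzero. -/
def sumFiber (f : K → K) (a b : K) : Set K :=
  {x | x ≠ 0 ∧ x + a ≠ 0 ∧ f x + f (x + a) + x * (x + a) = b}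

theorem eq_or_eq_add_of_fiber_eq {f : K → K}
    (hf : ∀ ε : K, ε ≠ 0 → Function.Injective fun x => f (x + ε) + f x + ε * x) {a x z : K}
    (h : f x + f (x + a) + x * (x + a) = f z + f (z + a) + z * (z + a)) :
    z = x ∨ z = x + a := by
  have two : ((2 : ℕ) : K) = 0 := CharP.cast_eq_zero K 2
  by_contra! ⟨hzx, hza⟩
  have hδ : x + z ≠ 0 := fun hc => hzx (by linear_combination -hc + z * two)
  have hx : x = z + a := hf (x + z) hδ <| by
    simp only [CharTwo.add_cancel_left]
    rw [show z + a + (x + z) = x + a by linear_combination z * two]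
    linear_combination h + (f z - f (x + a) - x * a) * two
  exact hza (by linear_combination -hx - a * two)

theorem sumFiber_eq_pair {f : K → K}
    (hf : ∀ ε : K, ε ≠ 0 → Function.Injective fun x => f (x + ε) + f x + ε * x) {a b x : K}
    (hx : x ∈ sumFiber f a b) : sumFiber f a b = {x, x + a} := by
  obtain ⟨hx0, hxa, hxb⟩ := hx
  ext z
  constructor
  · rintro ⟨-, -, hzb⟩
    exact eq_or_eq_add_of_fiber_eq hf (hxb.trans hzb.symm)
  · rintro (rfl | rfl)
    · exact ⟨hx0, hxa, hxb⟩
    · refine ⟨hxa, ?_, ?_⟩ <;> rw [CharTwo.add_cancel_right]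
      · exact hx0
      · linear_combination hxb

theorem ncard_sumFiber_of_ne_zero {f : K → K}
    (hf : ∀ ε : K, ε ≠ 0 → Function.Injective fun x => f (x + ε) + f x + ε * x) {a : K}
    (ha : a ≠ 0) (b : K) :
    (sumFiber f a b).ncard = 0 ∨ (sumFiber f a b).ncard = 2 := by
  rcases (sumFiber f a b).eq_empty_or_nonempty with h | ⟨x, hx⟩
  · exact Or.inl (by rw [h, Set.ncard_empty])
  · refine Or.inr ?_
    rw [sumFiber_eq_pair hf hx, Set.ncard_pair]
    simpa using ha

variable [PerfectRing K 2]

theorem sumFiber_zero (f : K → K) (b : K) :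
    sumFiber f 0 b = {(frobeniusEquiv K 2).symm b} \ {0} := by
  ext x
  simp only [sumFiber, add_zero, CharTwo.add_self_eq_zero, zero_add, Set.mem_ofPred_eq,
    Set.mem_sdiff, Set.mem_singleton_iff, RingEquiv.eq_symm_apply, frobeniusEquiv_apply,
    frobenius_def, sq]
  tauto

theorem sumFiber_zero_zero (f : K → K) : sumFiber f 0 0 = ∅ := by
  simp [sumFiber_zero]

theorem ncard_sumFiber_zero (f : K → K) {b : K} (hb : b ≠ 0) : (sumFiber f 0 b).ncard = 1 := by
  rw [sumFiber_zero, Set.sdiff_singleton_eq_self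
    (fun h => hb (by simpa using congrArg (frobeniusEquiv K 2) h.symm)), Set.ncard_singleton]

end PseudoPlanar

section GaloisRing

variable {n : ℕ}

theorem teich_coeff_zero (x : GaloisField 2 n) : (teich n x).coeff 0 = x := by
  rw [teich, WittVector.coeff_truncate]
  exact WittVector.teichmuller_coeff_zero 2 x

theorem teich_coeff_one (x : GaloisField 2 n) : (teich n x).coeff 1 = 0 := by
  rw [teich, WittVector.coeff_truncate]
  exact WittVector.teichmuller_coeff_pos 2 x 1 one_pos

theorem teich_zero : teich n 0 = 0 := by
  rw [teich, WittVector.teichmuller_zero, map_zero]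

theorem sq_pow_two_pow_pred (hn : 0 < n) (a : GaloisField 2 n) : (a ^ 2 ^ (n - 1)) ^ 2 = a := by
  have hcard : Nat.card (GaloisField 2 n) = 2 ^ (n - 1) * 2 := by
    rw [GaloisField.card 2 n hn.ne', ← pow_succ, Nat.sub_add_cancel hn]
  let := Fintype.ofFinite (GaloisField 2 n)
  rw [← pow_mul, ← hcard, Nat.card_eq_fintype_card, FiniteField.pow_card]

/-- For `0 < n`, the element of `D_f` with Witt coordinates `(x, f x)`. -/
def graphLift (n : ℕ) (f : GaloisField 2 n → GaloisField 2 n) (x : GaloisField 2 n) : GR n :=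
  teich n x + 2 * teich n (f x ^ 2 ^ (n - 1))

variable {f : GaloisField 2 n → GaloisField 2 n}

open TruncatedWittVector

theorem graphLift_coeff_zero (x : GaloisField 2 n) : (graphLift n f x).coeff 0 = x := by
  rw [graphLift, add_coeff_zero, teich_coeff_zero, two_mul_coeff_zero, add_zero]

theorem graphLift_coeff_one (hn : 0 < n) (x : GaloisField 2 n) :
    (graphLift n f x).coeff 1 = f x := by
  rw [graphLift, add_coeff_one, teich_coeff_one, two_mul_coeff_one, two_mul_coeff_zero,
    teich_coeff_zero, sq_pow_two_pow_pred hn, mul_zero, zero_add, add_zero]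

theorem graphLift_eq_zero_iff (hf0 : f 0 = 0) {x : GaloisField 2 n} :
    graphLift n f x = 0 ↔ x = 0 := by
  refine ⟨fun h => by rw [← graphLift_coeff_zero (f := f) x, h, coeff_zero], ?_⟩
  rintro rfl
  rw [graphLift, hf0, zero_pow (pow_ne_zero _ two_ne_zero), teich_zero, mul_zero, add_zero]

theorem mem_S1_iff (hf0 : f 0 = 0) {g : GR n} : g ∈ S1 n f ↔ ∃ x ≠ 0, graphLift n f x = g := by
  simp only [S1, Dset, Set.mem_sdiff, Set.mem_singleton_iff, Set.mem_ofPred_eq]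
  constructor
  · rintro ⟨⟨x, rfl⟩, hg⟩
    exact ⟨x, fun hx => hg ((graphLift_eq_zero_iff hf0).2 hx), rfl⟩
  · rintro ⟨x, hx, rfl⟩
    exact ⟨⟨x, rfl⟩, fun h => hx ((graphLift_eq_zero_iff hf0).1 h)⟩

theorem mem_S3_iff {g : GR n} : g ∈ S3 n ↔ g.coeff 0 = 0 ∧ g.coeff 1 ≠ 0 := by
  simp only [S3, Set.mem_sdiff, Set.mem_singleton_iff, Set.mem_ofPred_eq,
    ext_two_iff (y := (0 : GR n)), coeff_zero]
  constructor
  · rintro ⟨⟨x, rfl⟩, hg⟩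
    exact ⟨two_mul_coeff_zero x, fun h => hg ⟨two_mul_coeff_zero x, h⟩⟩
  · rintro ⟨h0, h1⟩
    refine ⟨⟨teich n ((frobeniusEquiv _ 2).symm (g.coeff 1)),
      ext_two_iff.2 ⟨?_, ?_⟩⟩, fun h => h1 h.2⟩
    · rw [h0, two_mul_coeff_zero]
    · rw [two_mul_coeff_one, teich_coeff_zero, ← frobenius_def,
        frobenius_apply_frobeniusEquiv_symm]

theorem graphLift_add_graphLift_eq_iff (hn : 0 < n) {x y : GaloisField 2 n} {g : GR n} :
    graphLift n f x + graphLift n f y = g ↔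
      y = x + g.coeff 0 ∧ f x + f (x + g.coeff 0) + x * (x + g.coeff 0) = g.coeff 1 := by
  have two : ((2 : ℕ) : GaloisField 2 n) = 0 := CharP.cast_eq_zero _ 2
  rw [eq_comm, ext_two_iff, add_coeff_zero, add_coeff_one, graphLift_coeff_zero,
    graphLift_coeff_zero, graphLift_coeff_one hn, graphLift_coeff_one hn]
  constructor
  · rintro ⟨h0, h1⟩
    obtain rfl : y = x + g.coeff 0 := by linear_combination -h0 - x * two
    exact ⟨rfl, h1.symm⟩
  · rintro ⟨rfl, h1⟩
    exact ⟨by linear_combination -x * two, h1.symm⟩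

theorem card_sumPairs (hn : 0 < n) (hf0 : f 0 = 0) (g : GR n) :
    Nat.card {p : GR n × GR n // p.1 ∈ S1 n f ∧ p.2 ∈ S1 n f ∧ p.1 + p.2 = g} =
      (sumFiber f (g.coeff 0) (g.coeff 1)).ncard := by
  let φ : sumFiber f (g.coeff 0) (g.coeff 1) →
      {p : GR n × GR n // p.1 ∈ S1 n f ∧ p.2 ∈ S1 n f ∧ p.1 + p.2 = g} := fun x =>
    ⟨(graphLift n f x, graphLift n f (x + g.coeff 0)), (mem_S1_iff hf0).2 ⟨x, x.2.1, rfl⟩,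
      (mem_S1_iff hf0).2 ⟨_, x.2.2.1, rfl⟩, (graphLift_add_graphLift_eq_iff hn).2 ⟨rfl, x.2.2.2⟩⟩
  have hφ : Function.Bijective φ := by
    refine ⟨fun x y h => Subtype.ext ?_, ?_⟩
    · simpa [φ, graphLift_coeff_zero] using congrArg (fun p => p.1.1.coeff 0) h
    · rintro ⟨⟨u, v⟩, hu, hv, huv⟩
      obtain ⟨x, hx, rfl⟩ := (mem_S1_iff hf0).1 hu
      obtain ⟨y, hy, rfl⟩ := (mem_S1_iff hf0).1 hv
      obtain ⟨rfl, hxg⟩ := (graphLift_add_graphLift_eq_iff hn).1 huv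
      exact ⟨⟨x, hx, hy, hxg⟩, rfl⟩
  exact (Nat.card_congr (Equiv.ofBijective φ hφ)).symm

end GaloisRing

/-- **Lemma (sums of `S₁`).** For a pseudo-planar function `f` on `F = 𝔽_{2^n}` with
`f(0) = 0`: (i) every element of `S₃` is represented exactly once as an ordered sum `x + y`
with `x, y ∈ S₁`; (ii) every element outside `S₃` is represented either zero times or twice. -/
theorem S1_squares
    (n : ℕ) (hn : 0 < n)
    (f : GaloisField 2 n → GaloisField 2 n)
    (hpp : ∀ ε : GaloisField 2 n, ε ≠ 0 →
      Function.Bijective (fun x => f (x + ε) + f x + ε * x))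
    (hf0 : f 0 = 0) :
    (∀ g ∈ S3 n,
      Nat.card {p : GR n × GR n // p.1 ∈ S1 n f ∧ p.2 ∈ S1 n f ∧ p.1 + p.2 = g} = 1) ∧
    (∀ g : GR n, g ∉ S3 n →
      Nat.card {p : GR n × GR n // p.1 ∈ S1 n f ∧ p.2 ∈ S1 n f ∧ p.1 + p.2 = g} = 0 ∨
      Nat.card {p : GR n × GR n // p.1 ∈ S1 n f ∧ p.2 ∈ S1 n f ∧ p.1 + p.2 = g} = 2) := by
  have hinj := fun ε hε => (hpp ε hε).injective
  refine ⟨fun g hg => ?_, fun g hg => ?_⟩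
  · obtain ⟨h0, h1⟩ := mem_S3_iff.1 hg
    rw [card_sumPairs hn hf0, h0, ncard_sumFiber_zero f h1]
  · rw [card_sumPairs hn hf0]
    by_cases h0 : g.coeff 0 = 0
    · obtain h1 : g.coeff 1 = 0 := by_contra fun h1 => hg (mem_S3_iff.2 ⟨h0, h1⟩)
      rw [h0, h1, sumFiber_zero_zero, Set.ncard_empty]
      exact Or.inl rfl
    · exact ncard_sumFiber_of_ne_zero hinj h0 _
end
end
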